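/- arXiv:2306.06100 — 4 statements merged into one kernel-verified Lean document; each statement's English description precedes it below -/
import Mathlib

section
/- If N ∘ A = p • (A ∘ N), then N is nilpotent. -/
/-!
Since `A⁻¹ * N * A = p • N`, `N` and `p • N` share a minimal polynomial `q`. The polynomial
`q.scaleRoots p` annihilates `p • N` and is monic of the same degree, so it equals `q`; comparing
coefficients gives `q.coeff i * (p ^ (deg q - i) - 1) = 0`, and as no positive power of `p` is `1`,
all coefficients below the top vanish. Hence `q = X ^ deg q` and `N ^ deg q = 0`.
-/

open Polynomial

theorem Polynomial.Monic.eq_X_pow_of_scaleRoots_eq {R : Type*} [CommRing R] [NoZeroDivisors R]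
    {q : R[X]} (hq : q.Monic) {p : R} (hp : ∀ m : ℕ, 1 ≤ m → p ^ m ≠ 1)
    (h : q.scaleRoots p = q) : q = X ^ q.natDegree := by
  ext i
  rw [coeff_X_pow]
  rcases lt_trichotomy i q.natDegree with hi | rfl | hi
  · have hcoeff : q.coeff i * (p ^ (q.natDegree - i) - 1) = 0 := by
      rw [mul_sub_one, ← coeff_scaleRoots, h, sub_self]
    rw [if_neg hi.ne]
    exact (mul_eq_zero.mp hcoeff).resolve_right (sub_ne_zero.mpr (hp _ (by omega)))
  · rw [if_pos rfl]
    exact hq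
  · rw [if_neg hi.ne', coeff_eq_zero_of_natDegree_lt hi]

section

variable {S : Type*} [Ring S]

theorem minpoly.smul_eq_of_mul_unit_eq_smul {R : Type*} [CommRing R] [Algebra R S]
    {a : S} {u : Sˣ} {p : R} (h : a * u = p • (u * a)) : minpoly R (p • a) = minpoly R a := by
  have hconj : (ConjAct.toConjAct u⁻¹) • a = p • a := by
    rw [ConjAct.units_smul_def, ConjAct.ofConjAct_toConjAct, inv_inv, mul_assoc, h,
      mul_smul_comm, Units.inv_mul_cancel_left]
  rw [← hconj]
  exact minpoly.algEquiv_eq (MulSemiringAction.toAlgEquiv R S (ConjAct.toConjAct u⁻¹)) a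

variable {K : Type*} [Field K] [Algebra K S]

theorem minpoly.scaleRoots_eq_of_smul_eq {a : S} (ha : IsIntegral K a) {p : K}
    (h : minpoly K (p • a) = minpoly K a) : (minpoly K a).scaleRoots p = minpoly K a := by
  have hann : Polynomial.aeval (p • a) ((minpoly K a).scaleRoots p) = 0 := by
    rw [Algebra.smul_def]
    exact scaleRoots_aeval_eq_zero (minpoly.aeval K a)
  refine eq_of_monic_of_dvd_of_natDegree_le (minpoly.monic ha)
    ((monic_scaleRoots_iff p).mpr (minpoly.monic ha)) ?_ (natDegree_scaleRoots _ _).le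
  simpa only [h] using minpoly.dvd K (p • a) hann

theorem IsIntegral.isNilpotent_of_mul_unit_eq_smul {a : S} (ha : IsIntegral K a) {u : Sˣ} {p : K}
    (hp : ∀ m : ℕ, 1 ≤ m → p ^ m ≠ 1) (h : a * u = p • (u * a)) : IsNilpotent a := by
  have hq : minpoly K a = X ^ (minpoly K a).natDegree :=
    (minpoly.monic ha).eq_X_pow_of_scaleRoots_eq hp
      (minpoly.scaleRoots_eq_of_smul_eq ha (minpoly.smul_eq_of_mul_unit_eq_smul h))
  have hann := minpoly.aeval K a
  rw [hq, map_pow, aeval_X] at hann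
  exact ⟨_, hann⟩

end

theorem stmt_8_general {K V : Type*} [Field K] [AddCommGroup V] [Module K V] [FiniteDimensional K V]
    (p : K) (hp : ∀ m : ℕ, 1 ≤ m → p ^ m ≠ 1)
    (A N : Module.End K V) (hA : IsUnit A)
    (h : N * A = p • (A * N)) : IsNilpotent N :=
  (Algebra.IsIntegral.isIntegral N).isNilpotent_of_mul_unit_eq_smul (u := hA.unit) hp h

/-- Let `K` be a field, `p ∈ K` nonzero with `p^m ≠ 1` for all `m ≥ 1`, `V` a
finite-dimensional `K`-vector space, `A : V → V` an invertible linear map and `N : V → V`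
a linear map.  If `N ∘ A = p • (A ∘ N)` then `N` is nilpotent. -/
theorem stmt_8 {K V : Type*} [Field K] [AddCommGroup V] [Module K V] [FiniteDimensional K V]
    (p : K) (hp0 : p ≠ 0) (hp : ∀ m : ℕ, 1 ≤ m → p ^ m ≠ 1)
    (A N : Module.End K V) (hA : IsUnit A)
    (h : N * A = p • (A * N)) : IsNilpotent N :=
  stmt_8_general p hp A N hA h
end

section
/- Given, for each n ∈ ℕ, a short exact sequence 0 → A_n → B_n → C_n → 0 of abelian groups, compatible with transition maps of inverse systems (A_n), (B_n), (C_n), and assuming the transition maps A_{n+1} → A_n are surjective for all n, the limit sequence 0 → lim_n A_n → lim_n B_n → lim_n C_n → 0 is exact. -/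
noncomputable section

/-- The inverse limit of a tower `… → F (n+1) → F n → …` of abelian groups, as the subgroup of
compatible families in the product. -/
def limSet (F : ℕ → Type*) [∀ n, AddCommGroup (F n)] (t : ∀ n, F (n + 1) →+ F n) :
    AddSubgroup (∀ n, F n) where
  carrier := {x | ∀ n, t n (x (n + 1)) = x n}
  add_mem' := by
    intro x y hx hy n
    simp [hx n, hy n]
  zero_mem' := by
    intro n
    simp
  neg_mem' := by
    intro x hx n
    simp [hx n]

/-- A compatible family of homomorphisms of towers induces a homomorphism on inverse limits. -/
def limHom {F G : ℕ → Type*} [∀ n, AddCommGroup (F n)] [∀ n, AddCommGroup (G n)]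
    (tF : ∀ n, F (n + 1) →+ F n) (tG : ∀ n, G (n + 1) →+ G n)
    (φ : ∀ n, F n →+ G n) (hφ : ∀ n a, tG n (φ (n + 1) a) = φ n (tF n a)) :
    limSet F tF →+ limSet G tG where
  toFun x := ⟨fun n => φ n (x.1 n), fun n => by rw [hφ n (x.1 (n + 1)), x.2 n]⟩
  map_zero' := by
    ext n
    simp
  map_add' x y := by
    ext n
    simp

/-- **Mittag-Leffler for towers with surjective transition maps.**
Given, for each `n ∈ ℕ`, a short exact sequence `0 → A n → B n → C n → 0` of abelian groups,
compatible with the transition maps of the inverse systems `(A n)`, `(B n)`, `(C n)`, and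
assuming all transition maps `A (n+1) → A n` are surjective, the limit sequence
`0 → lim A n → lim B n → lim C n → 0` is exact. -/
theorem stmt_10 {A B C : ℕ → Type*}
    [∀ n, AddCommGroup (A n)] [∀ n, AddCommGroup (B n)] [∀ n, AddCommGroup (C n)]
    (tA : ∀ n, A (n + 1) →+ A n) (tB : ∀ n, B (n + 1) →+ B n) (tC : ∀ n, C (n + 1) →+ C n)
    (f : ∀ n, A n →+ B n) (g : ∀ n, B n →+ C n)
    (hfinj : ∀ n, Function.Injective (f n))
    (hex : ∀ n, Function.Exact (f n) (g n))
    (hgsurj : ∀ n, Function.Surjective (g n))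
    (hcf : ∀ n a, tB n (f (n + 1) a) = f n (tA n a))
    (hcg : ∀ n b, tC n (g (n + 1) b) = g n (tB n b))
    (hsurj : ∀ n, Function.Surjective (tA n)) :
    Function.Injective (limHom tA tB f hcf) ∧
    Function.Exact (limHom tA tB f hcf) (limHom tB tC g hcg) ∧
    Function.Surjective (limHom tB tC g hcg) := by
  classical
  refine ⟨?_, ?_, ?_⟩
  · intro x y h
    apply Subtype.ext
    funext n
    apply hfinj n
    exact congrFun (congrArg Subtype.val h) n
  · intro b
    constructor
    · intro hb
      have hb' : ∀ n, g n (b.1 n) = 0 := fun n =>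
        congrFun (congrArg Subtype.val hb) n
      have ha : ∀ n, ∃ a, f n a = b.1 n := fun n => (hex n _).mp (hb' n)
      choose a ha using ha
      have hcompat : ∀ n, tA n (a (n + 1)) = a n := by
        intro n
        apply hfinj n
        rw [← hcf n, ha (n + 1), b.2 n, ha n]
      exact ⟨⟨a, hcompat⟩, Subtype.ext (funext fun n => ha n)⟩
    · rintro ⟨x, rfl⟩
      apply Subtype.ext
      funext n
      exact (hex n).apply_apply_eq_zero (x.1 n)
  · intro c
    -- recursively build compatible lifts
    have step : ∀ n (bn : B n), g n bn = c.1 n →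
        ∃ bn1 : B (n + 1), g (n + 1) bn1 = c.1 (n + 1) ∧ tB n bn1 = bn := by
      intro n bn hbn
      obtain ⟨b', hb'⟩ := hgsurj (n + 1) (c.1 (n + 1))
      have hker : g n (tB n b' - bn) = 0 := by
        rw [map_sub, ← hcg n, hb', c.2 n, hbn, sub_self]
      obtain ⟨a0, ha0⟩ := (hex n _).mp hker
      obtain ⟨a1, ha1⟩ := hsurj n a0
      refine ⟨b' - f (n + 1) a1, by rw [map_sub, hb', ((hex (n+1)).apply_apply_eq_zero a1 : _), sub_zero], ?_⟩
      rw [map_sub, hcf n, ha1, ha0]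
      abel
    obtain ⟨b0, hb0⟩ := hgsurj 0 (c.1 0)
    let seq : ∀ n, {x : B n // g n x = c.1 n} :=
      Nat.rec ⟨b0, hb0⟩ (fun n p => ⟨(step n p.1 p.2).choose,
        (step n p.1 p.2).choose_spec.1⟩)
    exact ⟨⟨fun n => (seq n).1, fun n => (step n (seq n).1 (seq n).2).choose_spec.2⟩,
      Subtype.ext (funext fun n => (seq n).2)⟩
end
end

section
/- Suppose each x_i is divisible by t, say x_i = t·y_i. Then η_t(Kos_R(x₁,…,x_d)) is isomorphic to Kos_R(y₁,…,y_d) as cochain complexes of R-modules. -/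
noncomputable section

variable {R : Type*} [CommRing R]

/-- The degree-`n` term of the Koszul complex `Kos_R(x₁, …, x_d)`:
functions from `n`-element subsets of `Fin d` to `R`. -/
abbrev KosT (d : ℕ) (R : Type*) (n : ℕ) : Type _ :=
  {s : Finset (Fin d) // s.card = n} → R

/-- The Koszul differential associated to a family `x : Fin d → R` of ring elements:
`(dω)(s) = Σ_{i ∈ s} (-1)^{#{j ∈ s : j < i}} · x i · ω (s \ {i})`. -/
noncomputable def kosD {d : ℕ} (x : Fin d → R) (n : ℕ) :
    KosT d R n →ₗ[R] KosT d R (n + 1) where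
  toFun ω s := ∑ i ∈ s.1.attach,
    ((-1 : ℤ) ^ ((s.1.filter (fun j => j < i.1)).card)) •
      (x i.1 * ω ⟨s.1.erase i.1, by simp [Finset.card_erase_of_mem i.2, s.2]⟩)
  map_add' ω ω' := by
    funext s
    simp [Finset.sum_add_distrib, smul_add, mul_add]
  map_smul' r ω := by
    funext s
    simp [Finset.smul_sum, mul_smul_comm, smul_comm r]
    rw [Finset.mul_sum]
    exact Finset.sum_congr rfl fun i _ => by ring

/-- The degree-`n` piece of the décalage `η_t(Kos_R(x₁, …, x_d))`, viewed inside the Koszul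
complex itself (legitimate because `δ(i) = i ≥ 0` in the relevant degrees):
`(η_t K)^n = { ω ∈ t^n K^n : dω ∈ t^{n+1} K^{n+1} }`. -/
noncomputable def etaSub {d : ℕ} (t : R) (x : Fin d → R) (n : ℕ) :
    Submodule R (KosT d R n) :=
  LinearMap.range ((t ^ n) • (LinearMap.id : KosT d R n →ₗ[R] KosT d R n)) ⊓
    Submodule.comap (kosD x n)
      (LinearMap.range ((t ^ (n + 1)) • (LinearMap.id : KosT d R (n + 1) →ₗ[R] KosT d R (n + 1))))

/-! If every `x i = t * y i` with `t` a non-zero-divisor, then `d_x = t • d_y`, so every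
`t ^ n • σ` already lies in `η_t`, and `η_t(Kos(x))` in degree `n` is exactly `t ^ n • Kos(y)ⁿ`.
Dividing by `t ^ n` is an isomorphism onto `Kos(y)`, and it intertwines the differentials because
`d_x (t ^ n • σ) = t ^ (n + 1) • d_y σ`. -/

theorem kosD_eq_smul_kosD {d : ℕ} {t : R} {x y : Fin d → R} (hxy : ∀ i, x i = t * y i)
    (n : ℕ) (ω : KosT d R n) : kosD x n ω = t • kosD y n ω := by
  funext s
  simp only [kosD, LinearMap.coe_mk, AddHom.coe_mk, Pi.smul_apply, smul_eq_mul,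
    Finset.mul_sum]
  refine Finset.sum_congr rfl fun i _ => ?_
  rw [hxy i.1, mul_assoc, mul_smul_comm]

theorem pow_smul_injective {ι : Type*} {t : R} (ht : t ∈ nonZeroDivisors R) (k : ℕ) :
    Function.Injective ((t ^ k • LinearMap.id : (ι → R) →ₗ[R] ι → R)) := fun _ _ h =>
  funext fun i => (mul_cancel_left_mem_nonZeroDivisors (pow_mem ht k)).mp (congrFun h i)

theorem etaSub_eq_range_pow_smul {d : ℕ} {t : R} {x y : Fin d → R}
    (hxy : ∀ i, x i = t * y i) (n : ℕ) :
    etaSub t x n = LinearMap.range (t ^ n • LinearMap.id : KosT d R n →ₗ[R] KosT d R n) := by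
  refine le_antisymm inf_le_left fun ω hω => ⟨hω, ?_⟩
  obtain ⟨σ, rfl⟩ := hω
  refine ⟨kosD y n σ, ?_⟩
  simp only [LinearMap.smul_apply, LinearMap.id_coe, id_eq, map_smul, kosD_eq_smul_kosD hxy,
    smul_smul, pow_succ']

def etaKosEquiv {d : ℕ} {t : R} (ht : t ∈ nonZeroDivisors R) {x y : Fin d → R}
    (hxy : ∀ i, x i = t * y i) (n : ℕ) : etaSub t x n ≃ₗ[R] KosT d R n :=
  (LinearEquiv.ofEq _ _ (etaSub_eq_range_pow_smul hxy n)).trans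
    (LinearEquiv.ofInjective _ (pow_smul_injective ht n)).symm

theorem pow_smul_etaKosEquiv {d : ℕ} {t : R} (ht : t ∈ nonZeroDivisors R) {x y : Fin d → R}
    (hxy : ∀ i, x i = t * y i) (n : ℕ) (z : etaSub t x n) :
    t ^ n • etaKosEquiv ht hxy n z = z :=
  congrArg Subtype.val <| (LinearEquiv.ofInjective _ (pow_smul_injective ht n)).apply_symm_apply
    (LinearEquiv.ofEq _ _ (etaSub_eq_range_pow_smul hxy n) z)

/-- The differential of `η_t(Kos(x))` is the restriction of `kosD x`, whence the hypothesis
`↑w = kosD x n ↑z`. -/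
theorem stmt_14 {d : ℕ} (t : R) (ht : t ∈ nonZeroDivisors R)
    (x y : Fin d → R) (hxy : ∀ i, x i = t * y i) :
    ∃ e : ∀ n : ℕ, (etaSub t x n) ≃ₗ[R] KosT d R n,
      ∀ (n : ℕ) (z : etaSub t x n) (w : etaSub t x (n + 1)),
        (w : KosT d R (n + 1)) = kosD x n (z : KosT d R n) →
          kosD y n (e n z) = e (n + 1) w := by
  refine ⟨etaKosEquiv ht hxy, fun n z w hw => pow_smul_injective ht (n + 1) ?_⟩
  change t ^ (n + 1) • kosD y n _ = t ^ (n + 1) • etaKosEquiv ht hxy (n + 1) w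
  rw [pow_smul_etaKosEquiv, hw, ← pow_smul_etaKosEquiv ht hxy n z, map_smul,
    kosD_eq_smul_kosD hxy, smul_smul, pow_succ]
end
end

section
/- The natural map from the p-adic completion lim_n M/p^nM to ∏_{j∈J} ∏_{I_j} ℤ_p is injective, and its image is exactly the set of families (x_j)_{j∈J} with x_j ∈ ∏_{I_j} ℤ_p such that for every n ≥ 1, x_j ∈ p^n·∏_{I_j} ℤ_p for all but finitely many j ∈ J. -/
set_option synthInstance.maxHeartbeats 1000000
set_option maxHeartbeats 1000000

noncomputable section

variable (p : ℕ) [Fact p.Prime] {J : Type*} (I : J → Type*)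

/-- The module `M = ⊕_{j ∈ J} ∏_{I_j} ℤ_p`. -/
abbrev bigM := Π₀ j : J, (I j → ℤ_[p])

/-- The submodule `p^n · M ⊆ M`. -/
def pnM (n : ℕ) : Submodule ℤ_[p] (bigM p I) :=
  LinearMap.range (((p : ℤ_[p]) ^ n) • (LinearMap.id : bigM p I →ₗ[ℤ_[p]] bigM p I))

/-- The quotients `M/p^n M`. -/
abbrev Qn (n : ℕ) := bigM p I ⧸ pnM p I n

/-- The transition maps `M/p^{n+1}M → M/p^n M`. -/
def tQ (n : ℕ) : Qn p I (n + 1) →ₗ[ℤ_[p]] Qn p I n :=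
  Submodule.mapQ (pnM p I (n + 1)) (pnM p I n) LinearMap.id
    (by
      rintro y ⟨x, rfl⟩
      exact ⟨(p : ℤ_[p]) • x, by
        simp only [LinearMap.smul_apply, LinearMap.id_apply, smul_smul, ← pow_succ]⟩)

/-- The `p`-adic completion `lim_n M/p^n M`, as the module of compatible families. -/
def limQ : Submodule ℤ_[p] (∀ n : ℕ, Qn p I n) where
  carrier := {x | ∀ n, tQ p I n (x (n + 1)) = x n}
  add_mem' := by intro x y hx hy n; simp [hx n, hy n]
  zero_mem' := by intro n; simp
  smul_mem' := by
    intro c x hx n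
    show tQ p I n (c • x (n + 1)) = c • x n
    rw [map_smul, hx n]

/-- The submodule `p^n · ∏_{I_j} ℤ_p` of the product `∏_{I_j} ℤ_p`. -/
def pnP (j : J) (n : ℕ) : Submodule ℤ_[p] (I j → ℤ_[p]) :=
  LinearMap.range (((p : ℤ_[p]) ^ n) • (LinearMap.id : (I j → ℤ_[p]) →ₗ[ℤ_[p]] (I j → ℤ_[p])))

/-- The submodule of `∏_{j ∈ J} ∏_{I_j} ℤ_p` of families `(x_j)` such that for every `n ≥ 1`,
`x_j ∈ p^n ∏_{I_j} ℤ_p` for all but finitely many `j`. -/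
def almostSmall : Submodule ℤ_[p] (∀ j : J, I j → ℤ_[p]) where
  carrier := {x | ∀ n : ℕ, {j : J | x j ∉ pnP p I j n}.Finite}
  add_mem' := by
    intro x y hx hy n
    refine Set.Finite.subset ((hx n).union (hy n)) ?_
    intro j hj
    by_contra hc
    simp only [Set.mem_union, Set.mem_setOf_eq, not_or, not_not] at hc
    exact hj (add_mem hc.1 hc.2)
  zero_mem' := by
    intro n
    convert Set.finite_empty
    ext j
    simp [Submodule.zero_mem]
  smul_mem' := by
    intro c x hx n
    refine Set.Finite.subset (hx n) ?_
    intro j hj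
    by_contra hc
    simp only [Set.mem_setOf_eq, not_not] at hc
    exact hj (Submodule.smul_mem _ _ hc)

lemma mem_pnP_iff {j : J} {n : ℕ} {f : I j → ℤ_[p]} :
    f ∈ pnP p I j n ↔ ∀ i, (p : ℤ_[p]) ^ n ∣ f i := by
  constructor
  · rintro ⟨g, rfl⟩ i
    exact ⟨g i, rfl⟩
  · intro h
    refine ⟨fun i => (h i).choose, funext fun i => ?_⟩
    simp only [LinearMap.smul_apply, LinearMap.id_apply, Pi.smul_apply, smul_eq_mul]
    exact ((h i).choose_spec).symm

lemma pnP_succ_le (j : J) (n : ℕ) : pnP p I j (n + 1) ≤ pnP p I j n := by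
  intro f hf
  rw [mem_pnP_iff] at hf ⊢
  exact fun i => dvd_trans (pow_dvd_pow _ (Nat.le_succ n)) (hf i)

lemma mem_pnM_iff {n : ℕ} {m : bigM p I} :
    m ∈ pnM p I n ↔ ∀ j, m j ∈ pnP p I j n := by
  classical
  constructor
  · rintro ⟨g, rfl⟩ j
    exact ⟨g j, rfl⟩
  · intro h
    have h' : ∀ j, ∃ g : I j → ℤ_[p], (p : ℤ_[p]) ^ n • g = m j := by
      intro j
      obtain ⟨g, hg⟩ := h j
      exact ⟨g, hg⟩
    refine ⟨DFinsupp.mk (DFinsupp.finite_support m).toFinset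
      (fun j => (h' j.1).choose), ?_⟩
    ext j i
    simp only [LinearMap.smul_apply, LinearMap.id_apply, DFinsupp.smul_apply]
    by_cases hj : j ∈ (DFinsupp.finite_support m).toFinset
    · rw [DFinsupp.mk_apply, dif_pos hj]
      rw [(h' j).choose_spec]
    · rw [DFinsupp.mk_apply, dif_neg hj, smul_zero]
      have : m j = 0 := by
        by_contra hc
        exact hj ((Set.Finite.mem_toFinset _).2 hc)
      rw [this]

lemma dvd_iff_norm_le {n : ℕ} {x : ℤ_[p]} :
    (p : ℤ_[p]) ^ n ∣ x ↔ ‖x‖ ≤ (p : ℝ) ^ (-n : ℤ) := by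
  rw [PadicInt.norm_le_pow_iff_mem_span_pow, Ideal.mem_span_singleton]

lemma eq_zero_of_forall_dvd {x : ℤ_[p]} (h : ∀ n : ℕ, (p : ℤ_[p]) ^ n ∣ x) : x = 0 := by
  have hp : (1 : ℝ) < p := mod_cast (Fact.out : p.Prime).one_lt
  by_contra hc
  have hx : 0 < ‖x‖ := norm_pos_iff.2 hc
  obtain ⟨n, hn⟩ := exists_pow_lt_of_lt_one hx (by
    rw [inv_lt_one_iff₀]; right; exact hp : (p : ℝ)⁻¹ < 1)
  have := (dvd_iff_norm_le p).1 (h n)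
  rw [zpow_neg, zpow_natCast] at this
  rw [inv_pow] at hn
  linarith

lemma exists_lim (a : ℕ → ℤ_[p]) (h : ∀ n, (p : ℤ_[p]) ^ n ∣ (a (n + 1) - a n)) :
    ∃ z : ℤ_[p], ∀ n, (p : ℤ_[p]) ^ n ∣ (z - a n) := by
  have hp : (1 : ℝ) < p := mod_cast (Fact.out : p.Prime).one_lt
  have hstep : ∀ n m, n ≤ m → ‖a m - a n‖ ≤ (p : ℝ) ^ (-n : ℤ) := by
    intro n m hnm
    induction m with
    | zero => simp_all
    | succ m ih =>
      rcases Nat.lt_or_ge n (m + 1) with hlt | hge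
      · have hnm' : n ≤ m := Nat.lt_succ_iff.mp hlt
        have h1 := ih hnm'
        have h2 : ‖a (m + 1) - a m‖ ≤ (p : ℝ) ^ (-n : ℤ) := by
          refine le_trans ((dvd_iff_norm_le p).1 (h m)) ?_
          apply zpow_le_zpow_right₀ (le_of_lt hp)
          omega
        calc ‖a (m + 1) - a n‖ = ‖(a (m + 1) - a m) + (a m - a n)‖ := by ring_nf
          _ ≤ max ‖a (m + 1) - a m‖ ‖a m - a n‖ := PadicInt.nonarchimedean _ _
          _ ≤ (p : ℝ) ^ (-n : ℤ) := max_le h2 h1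
      · have : n = m + 1 := le_antisymm hnm hge
        subst this
        simp only [sub_self, norm_zero]
        positivity
  have hcauchy : CauchySeq a := by
    apply cauchySeq_of_le_geometric (r := (p : ℝ)⁻¹) (C := 1)
    · rw [inv_lt_one_iff₀]; right; exact hp
    · intro n
      rw [dist_eq_norm, one_mul, ← norm_neg, neg_sub, inv_pow, ← zpow_natCast, ← zpow_neg]
      exact (dvd_iff_norm_le p).1 (h n)
  obtain ⟨z, hz⟩ := cauchySeq_tendsto_of_complete hcauchy
  refine ⟨z, fun n => ?_⟩
  rw [dvd_iff_norm_le]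
  have htend : Filter.Tendsto (fun m => ‖a m - a n‖) Filter.atTop (nhds ‖z - a n‖) :=
    ((hz.sub tendsto_const_nhds).norm)
  exact le_of_tendsto htend (Filter.eventually_atTop.2 ⟨n, fun m hm => hstep n m hm⟩)

-- new material
lemma tQ_mk (n : ℕ) (m : bigM p I) :
    tQ p I n (Submodule.Quotient.mk m) = Submodule.Quotient.mk m := by
  rw [tQ, Submodule.mapQ_apply, LinearMap.id_apply]

lemma mk_out (n : ℕ) (q : Qn p I n) :
    Submodule.Quotient.mk (Quotient.out q) = q := by
  exact Quotient.out_eq' q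

lemma F_spec_unique {z w : ∀ j, I j → ℤ_[p]}
    (h : ∀ n j, (fun j => z j - w j) j ∈ pnP p I j n) : z = w := by
  funext j i
  have h2 : ∀ n : ℕ, (p : ℤ_[p]) ^ n ∣ (z j i - w j i) := by
    intro n
    exact (mem_pnP_iff p I).1 (h n j) i
  exact sub_eq_zero.1 (eq_zero_of_forall_dvd p h2)

lemma exists_F (y : limQ p I) : ∃ z : ∀ j, I j → ℤ_[p],
    ∀ n (r : bigM p I), Submodule.Quotient.mk r = y.1 n →
      ∀ j, z j - r j ∈ pnP p I j n := by
  set r0 : ℕ → bigM p I := fun n => Quotient.out (y.1 n) with hr0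
  have hcompat : ∀ n, r0 (n + 1) - r0 n ∈ pnM p I n := by
    intro n
    rw [← Submodule.Quotient.eq]
    have := y.2 n
    rw [← mk_out p I (n+1) (y.1 (n+1)), tQ_mk] at this
    rw [this, mk_out]
  have hdvd : ∀ j i, ∃ z : ℤ_[p], ∀ n, (p : ℤ_[p]) ^ n ∣ (z - r0 n j i) := by
    intro j i
    apply exists_lim
    intro n
    have := (mem_pnP_iff p I).1 ((mem_pnM_iff p I).1 (hcompat n) j) i
    simpa using this
  refine ⟨fun j i => (hdvd j i).choose, fun n r hr j => ?_⟩
  have h1 : (fun i => (hdvd j i).choose) - r0 n j ∈ pnP p I j n := by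
    rw [mem_pnP_iff]
    intro i
    exact (hdvd j i).choose_spec n
  have h2 : r - r0 n ∈ pnM p I n := by
    rw [← Submodule.Quotient.eq, hr, ← mk_out p I n (y.1 n)]
  have h3 : r j - r0 n j ∈ pnP p I j n := (mem_pnM_iff p I).1 h2 j
  have := sub_mem h1 h3
  simpa using this

def F (y : limQ p I) : ∀ j, I j → ℤ_[p] := (exists_F p I y).choose

lemma F_spec (y : limQ p I) :
    ∀ n (r : bigM p I), Submodule.Quotient.mk r = y.1 n →
      ∀ j, F p I y j - r j ∈ pnP p I j n := (exists_F p I y).choose_spec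

lemma F_mem (y : limQ p I) : F p I y ∈ almostSmall p I := by
  intro n
  refine Set.Finite.subset (DFinsupp.finite_support (Quotient.out (y.1 n))) ?_
  intro j hj
  simp only [Set.mem_setOf_eq, DFinsupp.mem_support_iff] at hj ⊢
  intro hc
  apply hj
  have := F_spec p I y n (Quotient.out (y.1 n)) (mk_out p I n (y.1 n)) j
  rw [hc, sub_zero] at this
  exact this

lemma F_eq_of_spec (y : limQ p I) (r : ℕ → bigM p I)
    (hr : ∀ n, Submodule.Quotient.mk (r n) = y.1 n)
    (z : ∀ j, I j → ℤ_[p]) (hz : ∀ n j, z j - r n j ∈ pnP p I j n) :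
    F p I y = z := by
  apply F_spec_unique p I
  intro n j
  have h1 := F_spec p I y n (r n) (hr n) j
  have := sub_mem h1 (hz n j)
  simpa using this

def phi0 : limQ p I →ₗ[ℤ_[p]] almostSmall p I where
  toFun y := ⟨F p I y, F_mem p I y⟩
  map_add' x y := by
    set s := x + y with hs
    have hsn : ∀ n, s.1 n = x.1 n + y.1 n := fun n => rfl
    have key : F p I s = fun j => F p I x j + F p I y j := by
      apply F_eq_of_spec p I s
        (fun n => Quotient.out (x.1 n) + Quotient.out (y.1 n))
      · intro n
        rw [Submodule.Quotient.mk_add, mk_out, mk_out, hsn]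
      · intro n j
        have h1 := F_spec p I x n _ (mk_out p I n (x.1 n)) j
        have h2 := F_spec p I y n _ (mk_out p I n (y.1 n)) j
        have h3 := add_mem h1 h2
        convert h3 using 1
        simp only [DFinsupp.add_apply]
        funext i
        simp only [Pi.add_apply, Pi.sub_apply]
        ring
    apply Subtype.ext
    show F p I s = _
    rw [key]
    rfl
  map_smul' c x := by
    set s := c • x with hs
    have hsn : ∀ n, s.1 n = c • x.1 n := fun n => rfl
    have key : F p I s = fun j => c • F p I x j := by
      apply F_eq_of_spec p I s (fun n => c • Quotient.out (x.1 n))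
      · intro n
        rw [Submodule.Quotient.mk_smul, mk_out, hsn]
      · intro n j
        have h1 := F_spec p I x n _ (mk_out p I n (x.1 n)) j
        have h3 := Submodule.smul_mem _ c h1
        convert h3 using 1
        simp only [DFinsupp.smul_apply]
        funext i
        simp only [Pi.smul_apply, Pi.sub_apply, smul_eq_mul]
        ring
    apply Subtype.ext
    show F p I s = _
    rw [key]
    rfl

lemma phi0_injective : Function.Injective (phi0 p I) := by
  intro y y' h
  have hF : F p I y = F p I y' := congrArg Subtype.val h
  apply Subtype.ext
  funext n
  rw [← mk_out p I n (y.1 n), ← mk_out p I n (y'.1 n), Submodule.Quotient.eq,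
    mem_pnM_iff]
  intro j
  have h1 := F_spec p I y n _ (mk_out p I n (y.1 n)) j
  have h2 := F_spec p I y' n _ (mk_out p I n (y'.1 n)) j
  rw [hF] at h1
  have h3 := sub_mem h2 h1
  have h4 : (Quotient.out (y.1 n)) j - (Quotient.out (y'.1 n)) j
      = (F p I y' j - (Quotient.out (y'.1 n)) j) - (F p I y' j - (Quotient.out (y.1 n)) j) := by
    funext i; simp only [Pi.sub_apply]; ring
  rw [DFinsupp.sub_apply, h4]
  exact h3

lemma phi0_surjective : Function.Surjective (phi0 p I) := by
  rintro ⟨x, hx⟩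
  classical
  set mseq : ℕ → bigM p I := fun n =>
    DFinsupp.mk (hx n).toFinset (fun j => x j.1) with hmseq
  have hP1 : ∀ n j, x j - mseq n j ∈ pnP p I j n := by
    intro n j
    by_cases hj : j ∈ (hx n).toFinset
    · rw [hmseq]
      simp only [DFinsupp.mk_apply, dif_pos hj, sub_self]
      exact Submodule.zero_mem _
    · rw [hmseq]
      simp only [DFinsupp.mk_apply, dif_neg hj, sub_zero]
      rw [Set.Finite.mem_toFinset, Set.mem_setOf_eq, not_not] at hj
      exact hj
  have hcompat : ∀ n, mseq (n + 1) - mseq n ∈ pnM p I n := by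
    intro n
    rw [mem_pnM_iff]
    intro j
    have h1 : x j - mseq (n + 1) j ∈ pnP p I j n :=
      pnP_succ_le p I j n (hP1 (n + 1) j)
    have h3 := sub_mem (hP1 n j) h1
    have h2 : mseq (n + 1) j - mseq n j = (x j - mseq n j) - (x j - mseq (n + 1) j) := by
      funext i; simp only [Pi.sub_apply]; ring
    rw [DFinsupp.sub_apply, h2]
    exact h3
  refine ⟨⟨fun n => Submodule.Quotient.mk (mseq n), ?_⟩, ?_⟩
  · intro n
    show tQ p I n (Submodule.Quotient.mk (mseq (n + 1))) = Submodule.Quotient.mk (mseq n)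
    rw [tQ_mk, Submodule.Quotient.eq]
    exact hcompat n
  · apply Subtype.ext
    show F p I _ = x
    apply F_eq_of_spec p I _ mseq (fun n => rfl)
    exact fun n j => hP1 n j


def phiEquiv : limQ p I ≃ₗ[ℤ_[p]] almostSmall p I :=
  LinearEquiv.ofBijective (phi0 p I) ⟨phi0_injective p I, phi0_surjective p I⟩

/-- **The `p`-adic completion of `⊕_J ∏_{I_j} ℤ_p`.**  Let `p` be a prime, `J` a set and
`(I_j)_{j ∈ J}` a family of sets; set `M := ⊕_{j ∈ J} ∏_{I_j} ℤ_p`.  The natural map from the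
`p`-adic completion `lim_n M/p^n M` to `∏_{j ∈ J} ∏_{I_j} ℤ_p` is injective, with image
exactly the families `(x_j)` such that for every `n ≥ 1`, `x_j ∈ p^n ∏_{I_j} ℤ_p` for all
but finitely many `j`; i.e. there is an isomorphism of the completion onto this submodule,
compatible with the canonical maps from `M`. -/
theorem stmt_15 :
    ∃ φ : (limQ p I) ≃ₗ[ℤ_[p]] (almostSmall p I),
      ∀ m : bigM p I,
        φ ⟨fun n => Submodule.Quotient.mk m, by
            intro n
            show tQ p I n (Submodule.Quotient.mk m) = Submodule.Quotient.mk m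
            rw [tQ, Submodule.mapQ_apply, LinearMap.id_apply]⟩
          = ⟨fun j => m j, by
            intro n
            refine Set.Finite.subset (DFinsupp.finite_support m) ?_
            intro j hj
            simp only [Set.mem_setOf_eq] at hj ⊢
            intro hc
            exact hj (by rw [hc]; exact Submodule.zero_mem _)⟩ := by
  refine ⟨phiEquiv p I, fun m => ?_⟩
  apply Subtype.ext
  show F p I _ = fun j => m j
  apply F_eq_of_spec p I _ (fun _ => m) (fun n => rfl)
  intro n j
  simp only [sub_self]
  exact Submodule.zero_mem _
end
end
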